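/- Let V be an n-dimensional real vector space with basis (v₁, …, vₙ) and dual basis (v₁*, …, vₙ*). For every derivation D of ΛV there exist a unique linear map F : V → Λ₋V and an element η ∈ Λ₋V, unique up to adding an element of Λ₋V ∩ ΛⁿV, such that for all x ∈ ΛV: D(x) = Σ_{μ=1}^{n} F(v_μ) ∧ ι_{v_μ*}(x) + (1/2)(η ∧ x − x ∧ η). -/

import Mathlib

/-!
Split `D (ι v) = F v + G v` into odd and even parts. Applying `D` to `ι v ∧ ι v = 0` and using
supercommutativity gives `G v ∧ v = 0`, hence `G v ∧ w = -G w ∧ v`. With the number operator `N`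
(multiplication by `k` on `Λᵏ V`) and the Euler identity `N = Σ_μ v_μ ∧ ι_{v_μ*}`, this makes
`S = Σ_μ ι_{v_μ*}(G v_μ)` satisfy `S ∧ v = (N - n - 1) (G v)`, so `η = (N - n)⁻¹ S` satisfies
`η ∧ v = G v`. The right-hand side of the formula is a derivation sending `v` to `F v + η ∧ v`,
so it agrees with `D` on generators and hence everywhere. For uniqueness, the odd part of
`F v + η ∧ v` is `F v`, and an odd `δ` with `δ ∧ v = 0` for all `v` satisfies
`δ = v_μ ∧ ι_{v_μ*} δ` for each `μ`, so `N δ = n δ`, i.e. `δ ∈ Λⁿ V`.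
-/

/-- The degree-`k` homogeneous component `Λᵏ V` of the exterior algebra. -/
noncomputable def piece (V : Type*) [AddCommGroup V] [Module ℝ V] (k : ℕ) :
    Submodule ℝ (ExteriorAlgebra ℝ V) :=
  (LinearMap.range (ExteriorAlgebra.ι ℝ : V →ₗ[ℝ] ExteriorAlgebra ℝ V)) ^ k

/-- The odd part `Λ₋V`. -/
noncomputable def oddPart (V : Type*) [AddCommGroup V] [Module ℝ V] :
    Submodule ℝ (ExteriorAlgebra ℝ V) :=
  ⨆ k : ℕ, piece V (2 * k + 1)

open ExteriorAlgebra

section Leibniz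

variable {R A : Type*} [CommRing R] [Ring A] [Algebra R A]

def IsLeibniz (D : A →ₗ[R] A) : Prop := ∀ a b, D (a * b) = D a * b + a * D b

namespace IsLeibniz

lemma map_one {D : A →ₗ[R] A} (hD : IsLeibniz D) : D 1 = 0 := by
  simpa using hD 1 1

lemma add {D D' : A →ₗ[R] A} (hD : IsLeibniz D) (hD' : IsLeibniz D') :
    IsLeibniz (D + D') := by
  intro a b
  simp only [LinearMap.add_apply, hD a b, hD' a b, add_mul, mul_add]
  abel

lemma smul {D : A →ₗ[R] A} (hD : IsLeibniz D) (r : R) : IsLeibniz (r • D) := by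
  intro a b
  simp only [LinearMap.smul_apply, hD a b, smul_add, smul_mul_assoc, mul_smul_comm]

lemma sum {ι : Type*} {s : Finset ι} {D : ι → A →ₗ[R] A} (hD : ∀ i ∈ s, IsLeibniz (D i)) :
    IsLeibniz (∑ i ∈ s, D i) :=
  Finset.sum_induction D IsLeibniz (fun _ _ => add) (fun _ _ => by simp) hD

end IsLeibniz

lemma isLeibniz_mulLeft_sub_mulRight (η : A) :
    IsLeibniz (LinearMap.mulLeft R η - LinearMap.mulRight R η) := by
  intro a b
  simp only [LinearMap.sub_apply, LinearMap.mulLeft_apply, LinearMap.mulRight_apply]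
  noncomm_ring

end Leibniz

lemma Module.Basis.sum_coord_smul_map {R M N ι : Type*} [CommSemiring R] [AddCommMonoid M]
    [Module R M] [AddCommMonoid N] [Module R N] [Fintype ι] (b : Module.Basis ι R M)
    (L : M →ₗ[R] N) (v : M) : ∑ i, b.coord i v • L (b i) = L v := by
  simp only [Module.Basis.coord_apply, ← map_smul, ← map_sum, b.sum_repr]

noncomputable def evenPart (V : Type*) [AddCommGroup V] [Module ℝ V] :
    Submodule ℝ (ExteriorAlgebra ℝ V) :=
  ⨆ k : ℕ, piece V (2 * k)

section ExteriorAlgebra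

variable {V : Type*} [AddCommGroup V] [Module ℝ V]

local notation "ΛV" => ExteriorAlgebra ℝ V

noncomputable instance : GradedAlgebra (piece V) := ExteriorAlgebra.gradedAlgebra ℝ V

lemma ι_mem_piece_one (v : V) : ι ℝ v ∈ piece V 1 := by
  rw [piece, pow_one]
  exact LinearMap.mem_range_self _ v

lemma mul_mem_piece {j k : ℕ} {x y : ΛV} (hx : x ∈ piece V j) (hy : y ∈ piece V k) :
    x * y ∈ piece V (j + k) :=
  SetLike.GradedMul.mul_mem hx hy

lemma ι_mul_of_mem_piece {k : ℕ} {y : ΛV} (u : V) (hy : y ∈ piece V k) :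
    ι ℝ u * y = ((-1 : ℝ) ^ k) • (y * ι ℝ u) := by
  induction hy using Submodule.pow_induction_on_left' with
  | algebraMap r => rw [Algebra.commutes, pow_zero, one_smul]
  | add x y i _ _ ihx ihy => rw [mul_add, ihx, ihy, add_mul, smul_add]
  | mem_mul m hm i z _ ih =>
    obtain ⟨w, rfl⟩ := hm
    rw [← mul_assoc, eq_neg_of_add_eq_zero_left (ι_add_mul_swap u w), neg_mul, mul_assoc, ih,
      mul_smul_comm, ← mul_assoc, ← neg_smul, pow_succ, mul_neg_one]

lemma mul_comm_of_mem_piece {j k : ℕ} {x y : ΛV} (hx : x ∈ piece V j) (hy : y ∈ piece V k) :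
    x * y = ((-1 : ℝ) ^ (j * k)) • (y * x) := by
  induction hx using Submodule.pow_induction_on_left' with
  | algebraMap r => rw [Algebra.commutes, zero_mul, pow_zero, one_smul]
  | add x x' i _ _ ihx ihx' => rw [add_mul, ihx, ihx', mul_add, smul_add]
  | mem_mul m hm i z _ ih =>
    obtain ⟨w, rfl⟩ := hm
    rw [mul_assoc, ih, mul_smul_comm, ← mul_assoc, ι_mul_of_mem_piece w hy, smul_mul_assoc,
      smul_smul, mul_assoc, ← pow_add, Nat.succ_mul]

lemma piece_le_oddPart {k : ℕ} (hk : Odd k) : piece V k ≤ oddPart V := by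
  obtain ⟨m, rfl⟩ := hk
  exact le_iSup (fun k => piece V (2 * k + 1)) m

lemma piece_le_evenPart {k : ℕ} (hk : Even k) : piece V k ≤ evenPart V := by
  obtain ⟨m, rfl⟩ := even_iff_two_dvd.mp hk
  exact le_iSup (fun k => piece V (2 * k)) m

lemma mul_comm_of_mem_oddPart {k : ℕ} {w x : ΛV} (hw : w ∈ oddPart V) (hx : x ∈ piece V k) :
    w * x = ((-1 : ℝ) ^ k) • (x * w) := by
  induction hw using Submodule.iSup_induction' with
  | mem m w hw => rw [mul_comm_of_mem_piece hw hx, pow_mul, Odd.neg_one_pow ⟨m, rfl⟩]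
  | zero => simp
  | add w w' _ _ ihw ihw' => rw [add_mul, ihw, ihw', mul_add, smul_add]

lemma ι_mul_of_mem_oddPart {w : ΛV} (u : V) (hw : w ∈ oddPart V) :
    ι ℝ u * w = -(w * ι ℝ u) := by
  rw [mul_comm_of_mem_oddPart hw (ι_mem_piece_one u), pow_one, neg_one_smul, neg_neg]

lemma ι_mul_of_mem_evenPart {w : ΛV} (u : V) (hw : w ∈ evenPart V) :
    ι ℝ u * w = w * ι ℝ u := by
  induction hw using Submodule.iSup_induction' with
  | mem m w hw => rw [ι_mul_of_mem_piece u hw, pow_mul, neg_one_sq, one_pow, one_smul]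
  | zero => simp
  | add w w' _ _ ihw ihw' => rw [mul_add, ihw, ihw', add_mul]

lemma mul_ι_mem_evenPart {w : ΛV} (hw : w ∈ oddPart V) (v : V) :
    w * ι ℝ v ∈ evenPart V := by
  induction hw using Submodule.iSup_induction' with
  | mem m w hw =>
    exact piece_le_evenPart ⟨m + 1, by ring⟩ (mul_mem_piece hw (ι_mem_piece_one v))
  | zero => simp
  | add w w' _ _ ihw ihw' => rw [add_mul]; exact add_mem ihw ihw'

@[elab_as_elim]
lemma piece_induction {motive : ΛV → Prop} (zero : motive 0)
    (mem : ∀ k, ∀ y ∈ piece V k, motive y) (add : ∀ y z, motive y → motive z → motive (y + z))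
    (x : ΛV) : motive x :=
  DirectSum.Decomposition.inductionOn (piece V) zero (fun {k} y => mem k y y.2) add x

noncomputable def gradeScale (f : ℕ → ℝ) : ΛV →ₗ[ℝ] ΛV :=
  DirectSum.toModule ℝ ℕ ΛV (fun k => f k • (piece V k).subtype) ∘ₗ
    (DirectSum.decomposeLinearEquiv (piece V)).toLinearMap

lemma gradeScale_of_mem (f : ℕ → ℝ) {k : ℕ} {x : ΛV} (hx : x ∈ piece V k) :
    gradeScale f x = f k • x := by
  simp only [gradeScale, LinearMap.comp_apply, LinearEquiv.coe_coe,
    DirectSum.decomposeLinearEquiv_apply]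
  rw [DirectSum.decompose_of_mem _ hx, ← DirectSum.lof_eq_of ℝ, DirectSum.toModule_lof]
  rfl

lemma gradeScale_mem_oddPart (f : ℕ → ℝ) {x : ΛV} (hx : x ∈ oddPart V) :
    gradeScale f x ∈ oddPart V := by
  induction hx using Submodule.iSup_induction' with
  | mem m x hx =>
    rw [gradeScale_of_mem f hx]
    exact (oddPart V).smul_mem _ (piece_le_oddPart ⟨m, rfl⟩ hx)
  | zero => simp
  | add x y _ _ hx hy => rw [map_add]; exact add_mem hx hy

lemma gradeScale_gradeScale (f g : ℕ → ℝ) (x : ΛV) :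
    gradeScale f (gradeScale g x) = gradeScale (fun k => f k * g k) x := by
  induction x using piece_induction with
  | zero => simp
  | mem k y hy =>
    rw [gradeScale_of_mem g hy, map_smul, gradeScale_of_mem f hy, gradeScale_of_mem _ hy,
      smul_smul, mul_comm]
  | add y z hy hz => rw [map_add, map_add, map_add, hy, hz]

lemma gradeScale_mul_ι {f g : ℕ → ℝ} (hfg : ∀ k, g (k + 1) = f k) (y : ΛV) (v : V) :
    gradeScale f y * ι ℝ v = gradeScale g (y * ι ℝ v) := by
  induction y using piece_induction with
  | zero => simp
  | mem k y hy =>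
    rw [gradeScale_of_mem f hy, gradeScale_of_mem g (mul_mem_piece hy (ι_mem_piece_one v)),
      smul_mul_assoc, hfg k]
  | add y z hy hz => rw [map_add, add_mul, hy, hz, add_mul, map_add]

lemma gradeScale_eq_self {f : ℕ → ℝ} (hf : ∀ k, f k ≠ 1 → piece V k = ⊥) (x : ΛV) :
    gradeScale f x = x := by
  induction x using piece_induction with
  | zero => simp
  | mem k y hy =>
    by_cases hk : f k = 1
    · rw [gradeScale_of_mem f hy, hk, one_smul]
    · rw [hf k hk, Submodule.mem_bot] at hy
      rw [hy, map_zero]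
  | add y z hy hz => rw [map_add, hy, hz]

lemma decompose_gradeScale (f : ℕ → ℝ) (x : ΛV) (k : ℕ) :
    (DirectSum.decompose (piece V) (gradeScale f x) k : ΛV) =
      f k • (DirectSum.decompose (piece V) x k : ΛV) := by
  induction x using piece_induction with
  | zero => simp
  | mem j y hy =>
    rw [gradeScale_of_mem f hy, DirectSum.decompose_smul, DirectSum.smul_apply,
      Submodule.coe_smul]
    by_cases hjk : j = k
    · rw [← hjk]
    · rw [DirectSum.decompose_of_mem_ne _ hy hjk, smul_zero, smul_zero]
  | add y z hy hz => simp [DirectSum.decompose_add, hy, hz, smul_add]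

lemma mem_piece_of_gradeScale_eq_smul {f : ℕ → ℝ} {n : ℕ} (hf : ∀ k ≠ n, f k ≠ f n)
    {x : ΛV} (hx : gradeScale f x = f n • x) : x ∈ piece V n := by
  classical
  have hcomp : ∀ k ≠ n, (DirectSum.decompose (piece V) x k : ΛV) = 0 := by
    intro k hk
    have h := decompose_gradeScale f x k
    rw [hx, DirectSum.decompose_smul, DirectSum.smul_apply, Submodule.coe_smul, ← sub_eq_zero,
      ← sub_smul] at h
    exact (smul_eq_zero.mp h).resolve_left (sub_ne_zero.mpr (hf k hk).symm)
  rw [← DirectSum.sum_support_decompose (piece V) x]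
  refine Submodule.sum_mem _ fun k _ => ?_
  by_cases hk : k = n
  · subst hk; exact SetLike.coe_mem _
  · rw [hcomp k hk]; exact zero_mem _

noncomputable def numberOp : ΛV →ₗ[ℝ] ΛV := gradeScale (fun k => (k : ℝ))

lemma mem_piece_of_numberOp_eq_smul {n : ℕ} {x : ΛV} (hx : numberOp x = (n : ℝ) • x) :
    x ∈ piece V n :=
  mem_piece_of_gradeScale_eq_smul (fun _ hk => Nat.cast_injective.ne hk) hx

lemma numberOp_sub_smul (r : ℝ) (x : ΛV) :
    numberOp x - r • x = gradeScale (fun k => (k : ℝ) - r) x := by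
  induction x using piece_induction with
  | zero => simp
  | mem k y hy => rw [numberOp, gradeScale_of_mem _ hy, gradeScale_of_mem _ hy, sub_smul]
  | add y z hy hz => rw [map_add, map_add, smul_add, add_sub_add_comm, hy, hz]

noncomputable def oddProj : ΛV →ₗ[ℝ] ΛV := gradeScale (fun k => if Odd k then 1 else 0)

lemma oddProj_mem_oddPart (x : ΛV) : oddProj x ∈ oddPart V := by
  induction x using piece_induction with
  | zero => simp
  | mem k y hy =>
    rw [oddProj, gradeScale_of_mem _ hy]
    split_ifs with hk
    · rw [one_smul]; exact piece_le_oddPart hk hy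
    · rw [zero_smul]; exact zero_mem _
  | add y z hy hz => rw [map_add]; exact add_mem hy hz

lemma sub_oddProj_mem_evenPart (x : ΛV) : x - oddProj x ∈ evenPart V := by
  induction x using piece_induction with
  | zero => simp
  | mem k y hy =>
    rw [oddProj, gradeScale_of_mem _ hy]
    split_ifs with hk
    · rw [one_smul, sub_self]; exact zero_mem _
    · rw [zero_smul, sub_zero]; exact piece_le_evenPart (Nat.not_odd_iff_even.mp hk) hy
  | add y z hy hz => rw [map_add, add_sub_add_comm]; exact add_mem hy hz

lemma oddProj_of_mem_oddPart {x : ΛV} (hx : x ∈ oddPart V) : oddProj x = x := by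
  induction hx using Submodule.iSup_induction' with
  | mem m x hx => rw [oddProj, gradeScale_of_mem _ hx, if_pos ⟨m, rfl⟩, one_smul]
  | zero => simp
  | add x y _ _ hx hy => rw [map_add, hx, hy]

lemma oddProj_of_mem_evenPart {x : ΛV} (hx : x ∈ evenPart V) : oddProj x = 0 := by
  induction hx using Submodule.iSup_induction' with
  | mem m x hx =>
    rw [oddProj, gradeScale_of_mem _ hx, if_neg (Nat.not_odd_iff_even.mpr (even_two_mul m)),
      zero_smul]
  | zero => simp
  | add x y _ _ hx hy => rw [map_add, hx, hy, add_zero]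

lemma piece_eq_bot_of_lt {n k : ℕ} (b : Module.Basis (Fin n) ℝ V) (hk : n < k) :
    piece V k = ⊥ := by
  have := Module.Finite.of_basis b
  change ⋀[ℝ]^k V = ⊥
  rw [← Submodule.finrank_eq_zero, exteriorPower.finrank_eq,
    Module.finrank_eq_card_basis b, Fintype.card_fin, Nat.choose_eq_zero_of_lt hk]

lemma IsLeibniz.ext {D D' : ΛV →ₗ[ℝ] ΛV} (hD : IsLeibniz D) (hD' : IsLeibniz D')
    (h : ∀ v, D (ι ℝ v) = D' (ι ℝ v)) : D = D' := by
  refine LinearMap.ext fun x => ?_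
  induction x using ExteriorAlgebra.induction with
  | algebraMap r =>
    rw [Algebra.algebraMap_eq_smul_one, map_smul, map_smul, hD.map_one, hD'.map_one]
  | ι v => exact h v
  | mul a b ha hb => rw [hD, hD', ha, hb]
  | add a b ha hb => rw [map_add, map_add, ha, hb]

lemma isLeibniz_numberOp : IsLeibniz (numberOp : ΛV →ₗ[ℝ] ΛV) := by
  intro x y
  induction x using piece_induction with
  | zero => simp
  | mem j x hx =>
    induction y using piece_induction with
    | zero => simp
    | mem k y hy =>
      rw [numberOp, gradeScale_of_mem _ (mul_mem_piece hx hy), gradeScale_of_mem _ hx,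
        gradeScale_of_mem _ hy, smul_mul_assoc, mul_smul_comm, Nat.cast_add, add_smul]
    | add y z hy hz => rw [mul_add, map_add, hy, hz, map_add, mul_add, mul_add]; abel
  | add x z hx hz => rw [add_mul, map_add, hx, hz, map_add, add_mul, add_mul]; abel

lemma IsLeibniz.sub_oddProj_mul_ι_self {D : ΛV →ₗ[ℝ] ΛV} (hD : IsLeibniz D) (v : V) :
    (D (ι ℝ v) - oddProj (D (ι ℝ v))) * ι ℝ v = 0 := by
  have h := hD (ι ℝ v) (ι ℝ v)
  rw [ι_sq_zero, map_zero, ← sub_add_cancel (D (ι ℝ v)) (oddProj (D (ι ℝ v))), mul_add,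
    ι_mul_of_mem_evenPart v (sub_oddProj_mem_evenPart _),
    ι_mul_of_mem_oddPart v (oddProj_mem_oddPart _), add_mul] at h
  have h2 : (2 : ℝ) • ((D (ι ℝ v) - oddProj (D (ι ℝ v))) * ι ℝ v) = 0 := by
    rw [two_smul]
    convert h.symm using 1
    abel
  exact (smul_eq_zero.mp h2).resolve_left two_ne_zero

structure IsContraction (c : Module.Dual ℝ V → ΛV →ₗ[ℝ] ΛV) : Prop where
  map_one : ∀ α, c α 1 = 0
  map_ι : ∀ α (v : V), c α (ι ℝ v) = algebraMap ℝ _ (α v)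
  map_mul : ∀ α (k : ℕ) (x y : ΛV), x ∈ piece V k →
    c α (x * y) = c α x * y + ((-1 : ℝ) ^ k) • (x * c α y)

variable {n : ℕ} {c : Module.Dual ℝ V → ExteriorAlgebra ℝ V →ₗ[ℝ] ExteriorAlgebra ℝ V}

namespace IsContraction

lemma map_ι_mul (hc : IsContraction c) (α : Module.Dual ℝ V) (u : V) (y : ΛV) :
    c α (ι ℝ u * y) = α u • y - ι ℝ u * c α y := by
  rw [hc.map_mul α 1 _ _ (ι_mem_piece_one u), hc.map_ι, ← Algebra.smul_def, pow_one,
    neg_one_smul, ← sub_eq_add_neg]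

lemma map_eq_zero_of_mem_piece_zero (hc : IsContraction c) (α : Module.Dual ℝ V) {x : ΛV}
    (hx : x ∈ piece V 0) : c α x = 0 := by
  rw [piece, pow_zero, Submodule.mem_one] at hx
  obtain ⟨r, rfl⟩ := hx
  rw [Algebra.algebraMap_eq_smul_one, map_smul, hc.map_one, smul_zero]

lemma map_mem_piece_sub_one (hc : IsContraction c) (α : Module.Dual ℝ V) {k : ℕ} {x : ΛV}
    (hx : x ∈ piece V k) : c α x ∈ piece V (k - 1) := by
  induction hx using Submodule.pow_induction_on_left' with
  | algebraMap r =>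
    rw [hc.map_eq_zero_of_mem_piece_zero α (Submodule.algebraMap_mem r)]
    exact zero_mem _
  | add x y i _ _ hx hy => rw [map_add]; exact add_mem hx hy
  | mem_mul m hm i z hz ih =>
    obtain ⟨u, rfl⟩ := hm
    rw [hc.map_ι_mul, Nat.succ_sub_one]
    refine sub_mem (Submodule.smul_mem _ _ hz) ?_
    cases i with
    | zero => rw [hc.map_eq_zero_of_mem_piece_zero α hz, mul_zero]; exact zero_mem _
    | succ i => simpa [add_comm] using mul_mem_piece (ι_mem_piece_one u) ih

lemma map_mem_oddPart (hc : IsContraction c) (α : Module.Dual ℝ V) {x : ΛV}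
    (hx : x ∈ evenPart V) : c α x ∈ oddPart V := by
  induction hx using Submodule.iSup_induction' with
  | mem m x hx =>
    rcases m with _ | m
    · rw [hc.map_eq_zero_of_mem_piece_zero α hx]; exact zero_mem _
    · exact piece_le_oddPart ⟨m, by omega⟩ (hc.map_mem_piece_sub_one α hx)
  | zero => simp
  | add x y _ _ hx hy => rw [map_add]; exact add_mem hx hy

lemma map_mul_of_mem_evenPart (hc : IsContraction c) (α : Module.Dual ℝ V) {x : ΛV}
    (hx : x ∈ evenPart V) (y : ΛV) : c α (x * y) = c α x * y + x * c α y := by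
  induction hx using Submodule.iSup_induction' with
  | mem m x hx => rw [hc.map_mul α _ x y hx, pow_mul, neg_one_sq, one_pow, one_smul]
  | zero => simp
  | add x x' _ _ hx hx' => simp only [add_mul, map_add, hx, hx']; abel

lemma isLeibniz_mulLeft_comp (hc : IsContraction c) (α : Module.Dual ℝ V) {w : ΛV}
    (hw : w ∈ oddPart V) : IsLeibniz (LinearMap.mulLeft ℝ w ∘ₗ c α) := by
  intro x y
  simp only [LinearMap.comp_apply, LinearMap.mulLeft_apply]
  induction x using piece_induction with
  | zero => simp
  | mem k x hx =>
    have hwx : ((-1 : ℝ) ^ k) • (w * x) = x * w := by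
      rw [mul_comm_of_mem_oddPart hw hx, smul_smul, ← pow_add, ← two_mul, pow_mul, neg_one_sq,
        one_pow, one_smul]
    rw [hc.map_mul α k x y hx, mul_add, mul_smul_comm, ← mul_assoc w x, ← smul_mul_assoc, hwx,
      mul_assoc, mul_assoc]
  | add x x' hx hx' => simp only [add_mul, map_add, mul_add, hx, hx']; abel

lemma numberOp_eq_sum (hc : IsContraction c) (b : Module.Basis (Fin n) ℝ V) :
    numberOp = ∑ i, LinearMap.mulLeft ℝ (ι ℝ (b i)) ∘ₗ c (b.coord i) := by
  refine IsLeibniz.ext isLeibniz_numberOp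
    (IsLeibniz.sum fun i _ => hc.isLeibniz_mulLeft_comp _ (piece_le_oddPart odd_one
      (ι_mem_piece_one (b i)))) fun v => ?_
  rw [numberOp, gradeScale_of_mem _ (ι_mem_piece_one v), Nat.cast_one, one_smul]
  simp only [LinearMap.sum_apply, LinearMap.comp_apply,
    LinearMap.mulLeft_apply, hc.map_ι, ← Algebra.commutes, ← Algebra.smul_def]
  exact (b.sum_coord_smul_map (ι ℝ) v).symm

lemma mem_piece_of_forall_ι_mul_eq_zero (hc : IsContraction c) (b : Module.Basis (Fin n) ℝ V)
    {x : ΛV} (hx : ∀ v, ι ℝ v * x = 0) : x ∈ piece V n := by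
  have hfix : ∀ i, ι ℝ (b i) * c (b.coord i) x = x := by
    intro i
    have h := congrArg (c (b.coord i)) (hx (b i))
    rwa [hc.map_ι_mul, Module.Basis.coord_apply, b.repr_self, Finsupp.single_eq_same, one_smul,
      map_zero, sub_eq_zero, eq_comm] at h
  refine mem_piece_of_numberOp_eq_smul ?_
  simp only [hc.numberOp_eq_sum b, LinearMap.sum_apply, LinearMap.comp_apply,
    LinearMap.mulLeft_apply, hfix, Finset.sum_const, Finset.card_univ, Fintype.card_fin,
    Nat.cast_smul_eq_nsmul]

lemma map_mul_ι_of_mem_evenPart (hc : IsContraction c) (α : Module.Dual ℝ V) {x : ΛV}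
    (hx : x ∈ evenPart V) (v : V) : c α (x * ι ℝ v) = c α x * ι ℝ v + α v • x := by
  rw [hc.map_mul_of_mem_evenPart α hx, hc.map_ι, ← Algebra.commutes, ← Algebra.smul_def]

lemma sum_map_mul_ι (hc : IsContraction c) (b : Module.Basis (Fin n) ℝ V) {G : V →ₗ[ℝ] ΛV}
    (hG : ∀ v, G v ∈ evenPart V) (hGv : ∀ v, G v * ι ℝ v = 0) (v : V) :
    (∑ i, c (b.coord i) (G (b i))) * ι ℝ v = numberOp (G v) - ((n : ℝ) + 1) • G v := by
  have hGsymm : ∀ v w, G v * ι ℝ w = -(G w * ι ℝ v) := by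
    intro v w
    have h := hGv (v + w)
    rw [map_add, map_add, mul_add, add_mul, add_mul, hGv v, hGv w, zero_add, add_zero] at h
    exact eq_neg_of_add_eq_zero_right h
  have hterm : ∀ i, c (b.coord i) (G (b i)) * ι ℝ v =
      ι ℝ (b i) * c (b.coord i) (G v) - G v - b.coord i v • G (b i) := by
    intro i
    have h := hc.map_mul_ι_of_mem_evenPart (b.coord i) (hG (b i)) v
    rw [hGsymm, map_neg, hc.map_mul_ι_of_mem_evenPart _ (hG v), Module.Basis.coord_apply,
      b.repr_self, Finsupp.single_eq_same, one_smul,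
      ← neg_eq_iff_eq_neg.mpr (ι_mul_of_mem_oddPart _ (hc.map_mem_oddPart _ (hG v)))] at h
    rw [eq_sub_iff_add_eq, ← h]
    abel
  rw [Finset.sum_mul, Finset.sum_congr rfl fun i _ => hterm i, Finset.sum_sub_distrib,
    Finset.sum_sub_distrib, b.sum_coord_smul_map G v, hc.numberOp_eq_sum b]
  simp only [LinearMap.sum_apply, LinearMap.comp_apply, LinearMap.mulLeft_apply, Finset.sum_const,
    Finset.card_univ, Fintype.card_fin, ← Nat.cast_smul_eq_nsmul ℝ, add_smul, one_smul]
  abel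

/-- `η := (N - n)⁻¹ S`: since `· ∧ v` raises degrees by one, `η ∧ v = (N - n - 1)⁻¹ (S ∧ v)`,
which is `G v` by `sum_map_mul_ι`. The junk value `0⁻¹ = 0` discards the degree-`n` part of `S`,
harmlessly because `Λⁿ⁺¹V = 0`. -/
lemma exists_mul_ι_eq (hc : IsContraction c) (b : Module.Basis (Fin n) ℝ V) {G : V →ₗ[ℝ] ΛV}
    (hG : ∀ v, G v ∈ evenPart V) (hGv : ∀ v, G v * ι ℝ v = 0) :
    ∃ η ∈ oddPart V, ∀ v, η * ι ℝ v = G v := by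
  refine ⟨gradeScale (fun k => ((k : ℝ) - n)⁻¹) (∑ i, c (b.coord i) (G (b i))),
    gradeScale_mem_oddPart _ (sum_mem fun i _ => hc.map_mem_oddPart _ (hG (b i))), fun v => ?_⟩
  rw [gradeScale_mul_ι (g := fun k => ((k : ℝ) - (n + 1))⁻¹) (fun k => by push_cast; ring_nf),
    hc.sum_map_mul_ι b hG hGv, numberOp_sub_smul, gradeScale_gradeScale]
  refine gradeScale_eq_self (fun k hk => piece_eq_bot_of_lt b ?_) _
  have hk' : (k : ℝ) = n + 1 := by
    by_contra h
    exact hk (inv_mul_cancel₀ (sub_ne_zero.mpr h))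
  have : k = n + 1 := by exact_mod_cast hk'
  omega

end IsContraction

noncomputable def standardDerivation (b : Module.Basis (Fin n) ℝ V)
    (c : Module.Dual ℝ V → ΛV →ₗ[ℝ] ΛV) (F : V →ₗ[ℝ] ΛV) (η : ΛV) : ΛV →ₗ[ℝ] ΛV :=
  ∑ μ, LinearMap.mulLeft ℝ (F (b μ)) ∘ₗ c (b.coord μ) +
    (1 / 2 : ℝ) • (LinearMap.mulLeft ℝ η - LinearMap.mulRight ℝ η)

lemma standardDerivation_apply (b : Module.Basis (Fin n) ℝ V) (F : V →ₗ[ℝ] ΛV) (η x : ΛV) :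
    standardDerivation b c F η x =
      (∑ μ, F (b μ) * c (b.coord μ) x) + (1 / 2 : ℝ) • (η * x - x * η) := by
  simp only [standardDerivation, LinearMap.add_apply, LinearMap.sum_apply, LinearMap.comp_apply,
    LinearMap.mulLeft_apply, LinearMap.smul_apply, LinearMap.sub_apply, LinearMap.mulRight_apply]

namespace IsContraction

lemma isLeibniz_standardDerivation (hc : IsContraction c) (b : Module.Basis (Fin n) ℝ V)
    {F : V →ₗ[ℝ] ΛV} (hF : ∀ v, F v ∈ oddPart V) (η : ΛV) :
    IsLeibniz (standardDerivation b c F η) :=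
  (IsLeibniz.sum fun μ _ => hc.isLeibniz_mulLeft_comp _ (hF (b μ))).add
    ((isLeibniz_mulLeft_sub_mulRight η).smul _)

lemma standardDerivation_ι (hc : IsContraction c) (b : Module.Basis (Fin n) ℝ V)
    (F : V →ₗ[ℝ] ΛV) {η : ΛV} (hη : η ∈ oddPart V) (v : V) :
    standardDerivation b c F η (ι ℝ v) = F v + η * ι ℝ v := by
  rw [standardDerivation_apply, ι_mul_of_mem_oddPart v hη, sub_neg_eq_add, ← two_smul ℝ,
    smul_smul, one_div, inv_mul_cancel₀ two_ne_zero, one_smul]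
  simp only [hc.map_ι, ← Algebra.commutes, ← Algebra.smul_def, b.sum_coord_smul_map]

lemma eq_of_standardDerivation_eq (hc : IsContraction c) (b : Module.Basis (Fin n) ℝ V)
    {F F' : V →ₗ[ℝ] ΛV} {η η' : ΛV}
    (hF : ∀ v, F v ∈ oddPart V) (hF' : ∀ v, F' v ∈ oddPart V) (hη : η ∈ oddPart V)
    (hη' : η' ∈ oddPart V) (h : standardDerivation b c F' η' = standardDerivation b c F η) :
    F' = F ∧ η' - η ∈ piece V n := by
  have hι : ∀ v, F' v + η' * ι ℝ v = F v + η * ι ℝ v := fun v => by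
    rw [← hc.standardDerivation_ι b F' hη', h, hc.standardDerivation_ι b F hη]
  have hFF : F' = F := LinearMap.ext fun v => by
    have := congrArg oddProj (hι v)
    rwa [map_add, map_add, oddProj_of_mem_oddPart (hF' v), oddProj_of_mem_oddPart (hF v),
      oddProj_of_mem_evenPart (mul_ι_mem_evenPart hη' v),
      oddProj_of_mem_evenPart (mul_ι_mem_evenPart hη v), add_zero, add_zero] at this
  refine ⟨hFF, hc.mem_piece_of_forall_ι_mul_eq_zero b fun v => ?_⟩
  have hηv : η' * ι ℝ v = η * ι ℝ v := add_left_cancel (hFF ▸ hι v)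
  rw [ι_mul_of_mem_oddPart v (sub_mem hη' hη), sub_mul, hηv, sub_self, neg_zero]

end IsContraction

end ExteriorAlgebra

theorem stmt7_general (n : ℕ) (V : Type*) [AddCommGroup V] [Module ℝ V]
    (b : Module.Basis (Fin n) ℝ V)
    (c : Module.Dual ℝ V → ExteriorAlgebra ℝ V →ₗ[ℝ] ExteriorAlgebra ℝ V)
    (hc1 : ∀ α, c α 1 = 0)
    (hc2 : ∀ α (v : V), c α (ExteriorAlgebra.ι ℝ v) = algebraMap ℝ _ (α v))
    (hc3 : ∀ α (k : ℕ) (x y : ExteriorAlgebra ℝ V), x ∈ piece V k →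
      c α (x * y) = c α x * y + ((-1 : ℝ) ^ k) • (x * c α y))
    (D : ExteriorAlgebra ℝ V →ₗ[ℝ] ExteriorAlgebra ℝ V)
    (hD : ∀ a b : ExteriorAlgebra ℝ V, D (a * b) = D a * b + a * D b) :
    ∃ (F : V →ₗ[ℝ] ExteriorAlgebra ℝ V) (η : ExteriorAlgebra ℝ V),
      (∀ v : V, F v ∈ oddPart V) ∧ η ∈ oddPart V ∧
      (∀ x : ExteriorAlgebra ℝ V,
        D x = (∑ μ : Fin n, F (b μ) * c (b.coord μ) x) + (1 / 2 : ℝ) • (η * x - x * η)) ∧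
      (∀ (F' : V →ₗ[ℝ] ExteriorAlgebra ℝ V) (η' : ExteriorAlgebra ℝ V),
        (∀ v : V, F' v ∈ oddPart V) → η' ∈ oddPart V →
        (∀ x : ExteriorAlgebra ℝ V,
          D x = (∑ μ : Fin n, F' (b μ) * c (b.coord μ) x) + (1 / 2 : ℝ) • (η' * x - x * η')) →
        F' = F ∧ η' - η ∈ oddPart V ⊓ piece V n) := by
  have hc : IsContraction c := ⟨hc1, hc2, hc3⟩
  set F := oddProj ∘ₗ D ∘ₗ ι ℝ
  have hF : ∀ v, F v ∈ oddPart V := fun v => oddProj_mem_oddPart _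
  obtain ⟨η, hη, hηG⟩ := hc.exists_mul_ι_eq b (G := D ∘ₗ ι ℝ - F)
    (fun v => sub_oddProj_mem_evenPart _) (IsLeibniz.sub_oddProj_mul_ι_self hD)
  have hDeq : D = standardDerivation b c F η :=
    IsLeibniz.ext hD (hc.isLeibniz_standardDerivation b hF η) fun v => by
      rw [hc.standardDerivation_ι b F hη, hηG, LinearMap.sub_apply, add_sub_cancel,
        LinearMap.comp_apply]
  refine ⟨F, η, hF, hη, fun x => by rw [hDeq, standardDerivation_apply], ?_⟩
  intro F' η' hF' hη' hD'
  obtain ⟨rfl, hδ⟩ := hc.eq_of_standardDerivation_eq b hF hF' hη hη'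
    (LinearMap.ext fun x => by rw [standardDerivation_apply, ← hD', hDeq])
  exact ⟨rfl, sub_mem hη' hη, hδ⟩

/-- every derivation `D` of `ΛV` (with `V` of dimension `n`, basis `v₁,…,vₙ`,
dual basis `v₁*,…,vₙ*`) is of the form
`D x = Σ_μ F(v_μ) ∧ ι_{v_μ*}(x) + ½(η ∧ x − x ∧ η)` for a unique linear `F : V → Λ₋V`
and some `η ∈ Λ₋V` unique up to adding an element of `Λ₋V ∩ ΛⁿV`.  Here `c α` is the
contraction by `α`, characterized by the stated axioms. -/
theorem stmt7 (n : ℕ) (V : Type*) [AddCommGroup V] [Module ℝ V] [FiniteDimensional ℝ V]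
    (b : Module.Basis (Fin n) ℝ V)
    (c : Module.Dual ℝ V → ExteriorAlgebra ℝ V →ₗ[ℝ] ExteriorAlgebra ℝ V)
    (hc1 : ∀ α, c α 1 = 0)
    (hc2 : ∀ α (v : V), c α (ExteriorAlgebra.ι ℝ v) = algebraMap ℝ _ (α v))
    (hc3 : ∀ α (k : ℕ) (x y : ExteriorAlgebra ℝ V), x ∈ piece V k →
      c α (x * y) = c α x * y + ((-1 : ℝ) ^ k) • (x * c α y))
    (D : ExteriorAlgebra ℝ V →ₗ[ℝ] ExteriorAlgebra ℝ V)
    (hD : ∀ a b : ExteriorAlgebra ℝ V, D (a * b) = D a * b + a * D b) :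
    ∃ (F : V →ₗ[ℝ] ExteriorAlgebra ℝ V) (η : ExteriorAlgebra ℝ V),
      (∀ v : V, F v ∈ oddPart V) ∧ η ∈ oddPart V ∧
      (∀ x : ExteriorAlgebra ℝ V,
        D x = (∑ μ : Fin n, F (b μ) * c (b.coord μ) x) + (1 / 2 : ℝ) • (η * x - x * η)) ∧
      (∀ (F' : V →ₗ[ℝ] ExteriorAlgebra ℝ V) (η' : ExteriorAlgebra ℝ V),
        (∀ v : V, F' v ∈ oddPart V) → η' ∈ oddPart V →
        (∀ x : ExteriorAlgebra ℝ V,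
          D x = (∑ μ : Fin n, F' (b μ) * c (b.coord μ) x) + (1 / 2 : ℝ) • (η' * x - x * η')) →
        F' = F ∧ η' - η ∈ oddPart V ⊓ piece V n) :=
  stmt7_general n V b c hc1 hc2 hc3 D hD
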